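/- Let J, H be Hilbert spaces, K ∈ B(J,H), and {gₙ} ⊂ H satisfying the K-frame inequality α‖K* f‖_J² ≤ ∑ₙ |⟨f, gₙ⟩|² ≤ β‖f‖² for all f ∈ H. Then the synthesis operator D of {gₙ} is bounded on ℓ² and R(K) ⊆ R(D), and consequently there exists M ∈ B(J, ℓ²) with K = D M. -/

import Mathlib

open scoped ComplexInnerProductSpace

open scoped InnerProductSpace lp

/-!
The Bessel bound makes the analysis operator `T f = (⟪g n, f⟫)ₙ` bounded from `H` to `ℓ²`, and
its adjoint `D = T†` is the synthesis operator. The lower `K`-frame bound says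
`‖K† f‖ ≤ α^(-1/2) ‖T f‖`, so `K†` factors through `T`: `T f ↦ K† f` is a bounded map on the
range of `T`, which extends to the closure of that range and then, through the orthogonal
projection, to all of `ℓ²` (Douglas' lemma). Taking adjoints in `N ∘ T = K†` gives `K = D ∘ N†`.
-/

theorem Real.le_sqrt_mul_of_sq_le {a b c : ℝ} (hb : 0 ≤ b) (h : a ^ 2 ≤ c * b ^ 2) :
    a ≤ √c * b :=
  calc a ≤ |a| := le_abs_self a
    _ ≤ √(c * b ^ 2) := Real.abs_le_sqrt h
    _ = √c * b := by rw [Real.sqrt_mul' c (sq_nonneg b), Real.sqrt_sq hb]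

theorem LinearMap.denseRange_codRestrict_topologicalClosure {R M N : Type*} [Ring R]
    [AddCommGroup M] [Module R M] [AddCommGroup N] [Module R N] [TopologicalSpace N]
    [IsTopologicalAddGroup N] [ContinuousConstSMul R N] (f : M →ₗ[R] N) :
    DenseRange (f.codRestrict (LinearMap.range f).topologicalClosure
      fun x => (LinearMap.range f).le_topologicalClosure ⟨x, rfl⟩) := by
  rw [DenseRange, Subtype.dense_iff, ← Set.range_comp]
  exact (LinearMap.range f).topologicalClosure_coe.subset

namespace ContinuousLinearMap

variable {𝕜 E F G : Type*} [RCLike 𝕜]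
  [NormedAddCommGroup F] [InnerProductSpace 𝕜 F] [CompleteSpace F]

theorem exists_comp_eq_of_norm_le [NormedAddCommGroup E] [NormedSpace 𝕜 E]
    [NormedAddCommGroup G] [NormedSpace 𝕜 G] [CompleteSpace G]
    (A : E →L[𝕜] F) (B : E →L[𝕜] G) (C : ℝ) (hAB : ∀ x, ‖B x‖ ≤ C * ‖A x‖) :
    ∃ N : F →L[𝕜] G, N ∘L A = B := by
  let S := (LinearMap.range (A : E →ₗ[𝕜] F)).topologicalClosure
  let e : E →ₗ[𝕜] S := (A : E →ₗ[𝕜] F).codRestrict S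
    fun x => (LinearMap.range (A : E →ₗ[𝕜] F)).le_topologicalClosure ⟨x, rfl⟩
  refine ⟨(B : E →ₗ[𝕜] G).extendOfNorm e ∘L S.orthogonalProjectionOnto, ?_⟩
  ext x
  have hx : S.orthogonalProjectionOnto (A x) = e x :=
    S.orthogonalProjectionOnto_mem_subspace_eq_self (e x)
  calc _ = (B : E →ₗ[𝕜] G).extendOfNorm e (e x) := congrArg _ hx
    _ = B x := LinearMap.extendOfNorm_eq (e := e)
      (LinearMap.denseRange_codRestrict_topologicalClosure _) ⟨C, hAB⟩ x

theorem exists_eq_comp_of_norm_adjoint_le [NormedAddCommGroup E] [InnerProductSpace 𝕜 E]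
    [CompleteSpace E] [NormedAddCommGroup G] [InnerProductSpace 𝕜 G] [CompleteSpace G]
    (D : F →L[𝕜] G) (K : E →L[𝕜] G) (C : ℝ) (hDK : ∀ y, ‖adjoint K y‖ ≤ C * ‖adjoint D y‖) :
    ∃ M : E →L[𝕜] F, K = D ∘L M := by
  obtain ⟨N, hN⟩ := exists_comp_eq_of_norm_le (adjoint D) (adjoint K) C hDK
  refine ⟨adjoint N, ?_⟩
  rw [← adjoint_adjoint K, ← hN, adjoint_comp, adjoint_adjoint]

end ContinuousLinearMap

theorem lp.norm_sq_eq_tsum {ι : Type*} {E : ι → Type*} [∀ i, NormedAddCommGroup (E i)]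
    (x : lp E 2) : ‖x‖ ^ 2 = ∑' i, ‖x i‖ ^ 2 := by
  have h := lp.norm_rpow_eq_tsum (by norm_num : (0 : ℝ) < (2 : ENNReal).toReal) x
  simpa only [ENNReal.toReal_ofNat, Real.rpow_two] using h

section AnalysisOperator

variable {𝕜 ι H : Type*} [RCLike 𝕜] [NormedAddCommGroup H] [InnerProductSpace 𝕜 H]

theorem memℓp_inner_right (g : ι → H) {f : H} (hf : Summable fun n => ‖⟪f, g n⟫_𝕜‖ ^ 2) :
    Memℓp (fun n => ⟪g n, f⟫_𝕜) 2 :=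
  memℓp_gen <| by simpa only [ENNReal.toReal_ofNat, Real.rpow_two, norm_inner_symm] using hf

noncomputable def analysisOperator (g : ι → H) (β : ℝ)
    (hsum : ∀ f, Summable fun n => ‖⟪f, g n⟫_𝕜‖ ^ 2)
    (hle : ∀ f, ∑' n, ‖⟪f, g n⟫_𝕜‖ ^ 2 ≤ β * ‖f‖ ^ 2) : H →L[𝕜] ℓ²(ι, 𝕜) :=
  LinearMap.mkContinuous
    { toFun := fun f => ⟨fun n => ⟪g n, f⟫_𝕜, memℓp_inner_right g (hsum f)⟩
      map_add' := fun x y => lp.ext <| funext fun n => inner_add_right _ _ _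
      map_smul' := fun c x => lp.ext <| funext fun n => inner_smul_right _ _ _ }
    √β fun f => Real.le_sqrt_mul_of_sq_le (norm_nonneg f) <| (lp.norm_sq_eq_tsum _).trans_le
      (by simpa only [norm_inner_symm] using hle f : ∑' n, ‖⟪g n, f⟫_𝕜‖ ^ 2 ≤ β * ‖f‖ ^ 2)

variable (g : ι → H) (β : ℝ) (hsum : ∀ f, Summable fun n => ‖⟪f, g n⟫_𝕜‖ ^ 2)
  (hle : ∀ f, ∑' n, ‖⟪f, g n⟫_𝕜‖ ^ 2 ≤ β * ‖f‖ ^ 2)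

theorem analysisOperator_apply (f : H) (n : ι) : analysisOperator g β hsum hle f n = ⟪g n, f⟫_𝕜 :=
  rfl

theorem norm_analysisOperator_sq (f : H) :
    ‖analysisOperator g β hsum hle f‖ ^ 2 = ∑' n, ‖⟪f, g n⟫_𝕜‖ ^ 2 := by
  simp only [lp.norm_sq_eq_tsum, analysisOperator_apply, norm_inner_symm]

theorem hasSum_adjoint_analysisOperator [CompleteSpace H] (c : ℓ²(ι, 𝕜)) :
    HasSum (fun n => c n • g n) (ContinuousLinearMap.adjoint (analysisOperator g β hsum hle) c) := by
  classical
  set D := ContinuousLinearMap.adjoint (analysisOperator g β hsum hle)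
  have hsingle : ∀ n, D (lp.single 2 n 1) = g n := fun n =>
    ext_inner_right 𝕜 fun f => by
      simp only [D, ContinuousLinearMap.adjoint_inner_left, lp.inner_single_left,
        analysisOperator_apply, RCLike.inner_apply, map_one, mul_one]
  convert D.hasSum (lp.hasSum_single ENNReal.ofNat_ne_top c) using 2 with n
  rw [← hsingle, ← map_smul, ← lp.single_smul, smul_eq_mul, mul_one]

end AnalysisOperator

theorem stmt_15_general {J H : Type*}
    [NormedAddCommGroup J] [InnerProductSpace ℂ J] [CompleteSpace J]
    [NormedAddCommGroup H] [InnerProductSpace ℂ H] [CompleteSpace H]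
    (K : J →L[ℂ] H) (g : ℕ → H)
    (α β : ℝ) (hα : 0 < α)
    (hKframe : ∀ f : H, (Summable fun n => ‖⟪f, g n⟫‖ ^ 2) ∧
      α * ‖ContinuousLinearMap.adjoint K f‖ ^ 2 ≤ ∑' n, ‖⟪f, g n⟫‖ ^ 2 ∧
      ∑' n, ‖⟪f, g n⟫‖ ^ 2 ≤ β * ‖f‖ ^ 2) :
    ∃ D : lp (fun _ : ℕ => ℂ) 2 →L[ℂ] H,
      (∀ c : lp (fun _ : ℕ => ℂ) 2, HasSum (fun n => c n • g n) (D c)) ∧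
      Set.range K ⊆ Set.range D ∧
      ∃ M : J →L[ℂ] lp (fun _ : ℕ => ℂ) 2, K = D.comp M := by
  let T := analysisOperator g β (fun f => (hKframe f).1) (fun f => (hKframe f).2.2)
  have hKT : ∀ f, ‖ContinuousLinearMap.adjoint K f‖ ≤
      √α⁻¹ * ‖ContinuousLinearMap.adjoint (ContinuousLinearMap.adjoint T) f‖ := fun f => by
    rw [ContinuousLinearMap.adjoint_adjoint]
    refine Real.le_sqrt_mul_of_sq_le (norm_nonneg _) ?_
    rw [norm_analysisOperator_sq, le_inv_mul_iff₀ hα]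
    exact (hKframe f).2.1
  obtain ⟨M, hM⟩ := ContinuousLinearMap.exists_eq_comp_of_norm_adjoint_le _ K _ hKT
  refine ⟨ContinuousLinearMap.adjoint T, hasSum_adjoint_analysisOperator _ _ _ _, ?_, M, hM⟩
  rw [hM, ContinuousLinearMap.coe_comp]
  exact Set.range_comp_subset_range _ _

/-- Let `J, H` be Hilbert spaces, `K ∈ B(J,H)`, and `{gₙ} ⊂ H` satisfying the `K`-frame
inequality `α‖K* f‖_J² ≤ ∑ₙ |⟨f, gₙ⟩|² ≤ β‖f‖²` for all `f ∈ H`. Then the synthesis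
operator `D` of `{gₙ}` is bounded on `ℓ²` and `R(K) ⊆ R(D)`, and consequently there exists
`M ∈ B(J, ℓ²)` with `K = D M`. -/
theorem stmt_15 {J H : Type*}
    [NormedAddCommGroup J] [InnerProductSpace ℂ J] [CompleteSpace J]
    [NormedAddCommGroup H] [InnerProductSpace ℂ H] [CompleteSpace H]
    (K : J →L[ℂ] H) (g : ℕ → H)
    (α β : ℝ) (hα : 0 < α) (hβ : 0 < β)
    (hKframe : ∀ f : H, (Summable fun n => ‖⟪f, g n⟫‖ ^ 2) ∧
      α * ‖ContinuousLinearMap.adjoint K f‖ ^ 2 ≤ ∑' n, ‖⟪f, g n⟫‖ ^ 2 ∧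
      ∑' n, ‖⟪f, g n⟫‖ ^ 2 ≤ β * ‖f‖ ^ 2) :
    ∃ D : lp (fun _ : ℕ => ℂ) 2 →L[ℂ] H,
      (∀ c : lp (fun _ : ℕ => ℂ) 2, HasSum (fun n => c n • g n) (D c)) ∧
      Set.range K ⊆ Set.range D ∧
      ∃ M : J →L[ℂ] lp (fun _ : ℕ => ℂ) 2, K = D.comp M :=
  stmt_15_general K g α β hα hKframe
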